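/- Consider the HRC instance with one hospital h of capacity 2 with preference c1 ≻ c3 ≻ c4 ≻ c2, and two connected couples C1=(c1,c2) and C2=(c3,c4), each finding acceptable only the pair (h,h). Then both the matching assigning C1 to (h,h) and the matching assigning C2 to (h,h) are stable; hence stable matchings in HRC with type-b couples need not match the same set of doctors. -/

import Mathlib

namespace Stmt6

/-- Doctors: two connected couples `(c1,c2)` and `(c3,c4)`. -/
inductive Doc | c1 | c2 | c3 | c4
deriving DecidableEq

instance : Fintype Doc := ⟨{Doc.c1, Doc.c2, Doc.c3, Doc.c4}, fun x => by cases x <;> decide⟩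

open Doc

/-- The unique hospital `h` (capacity 2) has preference list c1 ≻ c3 ≻ c4 ≻ c2. -/
def rk : Doc → ℕ
  | c1 => 0
  | c3 => 1
  | c4 => 2
  | c2 => 3

/-- `M x = true` means doctor `x` is assigned to the unique hospital `h`. -/
def count (M : Doc → Bool) : ℕ := (Finset.univ.filter (fun x => M x = true)).card

/-- A connected couple `(x,y)` whose only acceptable pair is `(h,h)` blocks `M`:
the couple is unmatched and either `h` has two free posts, or one free post and a member
beats an assignee, or `h` is full and `x` beats an assignee `r` and `y` beats an
assignee distinct from `r`. -/
def coupleBlocks (x y : Doc) (M : Doc → Bool) : Prop :=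
  ¬ (M x = true ∧ M y = true) ∧
  (2 ≤ 2 - count M ∨
   (2 - count M = 1 ∧ ∃ r, M r = true ∧ (rk x < rk r ∨ rk y < rk r)) ∨
   (count M = 2 ∧ ∃ r s, M r = true ∧ M s = true ∧ r ≠ s ∧ rk x < rk r ∧ rk y < rk s))

/-- The matching assigning couple `(c1,c2)` to `(h,h)`. -/
def MA : Doc → Bool
  | c1 => true
  | c2 => true
  | _ => false

/-- The matching assigning couple `(c3,c4)` to `(h,h)`. -/
def MB : Doc → Bool
  | c3 => true
  | c4 => true
  | _ => false

theorem count_MA : count MA = 2 := by decide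

theorem count_MB : count MB = 2 := by decide

theorem not_coupleBlocks_of_matched {x y : Doc} {M : Doc → Bool} (hx : M x = true)
    (hy : M y = true) : ¬ coupleBlocks x y M :=
  fun hb => hb.1 ⟨hx, hy⟩

theorem not_coupleBlocks_of_count_eq_two {x y : Doc} {M : Doc → Bool} (hM : count M = 2)
    (hbeat : ∀ r s, M r = true → M s = true → rk x < rk r → rk y < rk s → r = s) :
    ¬ coupleBlocks x y M := by
  rintro ⟨-, hfree | ⟨hfree, -⟩ | ⟨-, r, s, hr, hs, hrs, hxr, hys⟩⟩
  · omega
  · omega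
  · exact hrs (hbeat r s hr hs hxr hys)

/-- both matchings (assigning either couple to `(h,h)`) are stable, and
they match different sets of doctors, so stable matchings in HRC with type-b couples
need not match the same set of doctors. -/
theorem stmt_6 :
    (¬ coupleBlocks c1 c2 MA ∧ ¬ coupleBlocks c3 c4 MA) ∧
    (¬ coupleBlocks c1 c2 MB ∧ ¬ coupleBlocks c3 c4 MB) ∧
    (∃ x, MA x ≠ MB x) := by
  refine ⟨⟨not_coupleBlocks_of_matched rfl rfl, not_coupleBlocks_of_count_eq_two count_MA ?_⟩,
    ⟨not_coupleBlocks_of_count_eq_two count_MB ?_, not_coupleBlocks_of_matched rfl rfl⟩,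
    c1, by decide⟩
  -- c3 and c4 are both ranked below c1, so the only assignee of `MA` either can displace is c2
  · decide
  -- c2 is ranked last, so displaces nobody
  · decide

end Stmt6
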